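/- arXiv:1009.0795 — 2 statements merged into one kernel-verified Lean document; each statement's English description precedes it below -/
import Mathlib

section
/- Let p > 1 and let v : ℝ^{m×n} → ℝ be continuous and positively p-homogeneous. Suppose there exists q ∈ ℝᵐ such that for all u ∈ W^{1,∞}_{Γ_ϱ}(Ω_ϱ;ℝᵐ) one has ∫_{Γ_ϱ} q·u dS + v(0)|Ω_ϱ| ≤ ∫_{Ω_ϱ} v(∇u(x)) dx. Then the same inequality holds with q = 0; that is, ∫_{Ω_ϱ} v(∇u(x)) dx ≥ 0 for all u ∈ W^{1,∞}_{Γ_ϱ}(Ω_ϱ;ℝᵐ). -/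
open MeasureTheory Filter
open scoped RealInnerProductSpace
noncomputable section

abbrev Vec (n : ℕ) := EuclideanSpace ℝ (Fin n)
abbrev Mat (m n : ℕ) := EuclideanSpace ℝ (Fin m × Fin n)

noncomputable def gradMat {m n : ℕ} (u : Vec n → Vec m) (x : Vec n) : Mat m n :=
  (EuclideanSpace.equiv (Fin m × Fin n) ℝ).symm
    (fun p => fderiv ℝ u x (EuclideanSpace.single p.2 1) p.1)

/-- A standard boundary domain `Ω_ϱ` with unit normal `ϱ`: a bounded open domain contained
in the half-space `{ϱ·x < a}` whose boundary contains a nonempty part `Γ` which is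
relatively open in the hyperplane `{ϱ·x = a}`. -/
structure StdBoundaryDomain (n : ℕ) where
  ϱ : Vec n
  hϱ : ‖ϱ‖ = 1
  a : ℝ
  Ω : Set (Vec n)
  hopen : IsOpen Ω
  hbd : Bornology.IsBounded Ω
  hsub : Ω ⊆ {x : Vec n | ⟪ϱ, x⟫ < a}
  Γ : Set (Vec n)
  hΓsub : Γ ⊆ frontier Ω ∩ {x : Vec n | ⟪ϱ, x⟫ = a}
  hΓrelopen : ∀ x ∈ Γ, ∃ ε > 0, Metric.ball x ε ∩ {y : Vec n | ⟪ϱ, y⟫ = a} ⊆ Γ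
  hΓne : Γ.Nonempty

/-- Membership in `W^{1,∞}_{Γ_ϱ}(Ω_ϱ;ℝᵐ)`: a Lipschitz map vanishing on `∂Ω_ϱ \ Γ_ϱ`. -/
def MemW1inftyGamma {m n : ℕ} (D : StdBoundaryDomain n) (u : Vec n → Vec m) : Prop :=
  (∃ K : NNReal, LipschitzWith K u) ∧ ∀ x ∈ frontier D.Ω \ D.Γ, u x = 0

/-!
Replacing `u` by `t • u` with `t > 0` turns the hypothesis into `t * A ≤ t ^ p * B`, where
`A` is the boundary term of `u` and `B = ∫ v (∇u)` (note `v 0 = 0`). Dividing by `t` gives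
`A ≤ t ^ (p - 1) * B` for all `t > 0`; since `p > 1`, letting `t → ∞` forces `B ≥ 0`.
-/

lemma gradMat_const_smul {m n : ℕ} (t : ℝ) (u : Vec n → Vec m) (x : Vec n) :
    gradMat (t • u) x = t • gradMat u x := by
  ext i
  simp [gradMat, fderiv_const_smul_field]

lemma MemW1inftyGamma.const_smul {m n : ℕ} {D : StdBoundaryDomain n} {u : Vec n → Vec m}
    (hu : MemW1inftyGamma D u) (t : ℝ) : MemW1inftyGamma D (t • u) := by
  obtain ⟨⟨K, hK⟩, hzero⟩ := hu
  exact ⟨⟨‖t‖₊ * K, (lipschitzWith_smul t).comp hK⟩,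
    fun x hx => by simp [hzero x hx]⟩

lemma map_zero_of_rpow_homogeneous {E : Type*} [AddCommGroup E] [Module ℝ E]
    {p : ℝ} (hp : p ≠ 0) {v : E → ℝ} (hhom : ∀ α : ℝ, 0 ≤ α → ∀ s : E, v (α • s) = α ^ p * v s) :
    v 0 = 0 := by
  simpa [Real.zero_rpow hp] using hhom 0 le_rfl 0

lemma nonneg_of_forall_mul_le_rpow_mul {p A B : ℝ} (hp : 1 < p)
    (h : ∀ t : ℝ, 0 < t → t * A ≤ t ^ p * B) : 0 ≤ B := by
  by_contra! hB
  have hdiv : ∀ t : ℝ, 0 < t → A ≤ t ^ (p - 1) * B := fun t ht => by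
    have hpow : t ^ p = t * t ^ (p - 1) := by
      rw [Real.rpow_sub ht, Real.rpow_one, mul_div_cancel₀ _ ht.ne']
    exact le_of_mul_le_mul_left (by simpa only [hpow, mul_assoc] using h t ht) ht
  have hlim : Tendsto (fun t : ℝ => t ^ (p - 1) * B) atTop atBot :=
    (tendsto_rpow_atTop (by linarith)).atTop_mul_const_of_neg hB
  obtain ⟨t, ht, hlt⟩ :=
    ((eventually_gt_atTop 0).and (hlim.eventually (eventually_lt_atBot A))).exists
  linarith [hdiv t ht]

theorem stmt2_general {m n : ℕ} (p : ℝ) (hp : 1 < p) (v : Mat m n → ℝ)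
    (hhom : ∀ α : ℝ, 0 ≤ α → ∀ s : Mat m n, v (α • s) = α ^ p * v s)
    (D : StdBoundaryDomain n) (q : Vec m)
    (hqcb : ∀ u : Vec n → Vec m, MemW1inftyGamma D u →
      (∫ x in D.Γ, ⟪q, u x⟫ ∂μH[(n : ℝ) - 1]) + v 0 * (volume D.Ω).toReal ≤
        ∫ x in D.Ω, v (gradMat u x)) :
    ∀ u : Vec n → Vec m, MemW1inftyGamma D u →
      0 ≤ ∫ x in D.Ω, v (gradMat u x) := by
  intro u hu
  have hv0 : v 0 = 0 := map_zero_of_rpow_homogeneous (by linarith) hhom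
  refine nonneg_of_forall_mul_le_rpow_mul (A := ∫ x in D.Γ, ⟪q, u x⟫ ∂μH[(n : ℝ) - 1]) hp
    fun t ht => ?_
  simpa only [Pi.smul_apply, real_inner_smul_right, integral_const_mul, gradMat_const_smul,
    hhom t ht.le, hv0, zero_mul, add_zero] using hqcb (t • u) (hu.const_smul t)

/-- for a continuous positively `p`-homogeneous `v` (`p > 1`), if the
quasiconvexity-at-the-boundary inequality holds with some `q ∈ ℝᵐ`, then it holds with
`q = 0`, i.e. `∫_{Ω_ϱ} v(∇u) ≥ 0` for all admissible `u`. -/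
theorem stmt2 {m n : ℕ} (p : ℝ) (hp : 1 < p) (v : Mat m n → ℝ) (hv : Continuous v)
    (hhom : ∀ α : ℝ, 0 ≤ α → ∀ s : Mat m n, v (α • s) = α ^ p * v s)
    (D : StdBoundaryDomain n) (q : Vec m)
    (hqcb : ∀ u : Vec n → Vec m, MemW1inftyGamma D u →
      (∫ x in D.Γ, ⟪q, u x⟫ ∂μH[(n : ℝ) - 1]) + v 0 * (volume D.Ω).toReal ≤
        ∫ x in D.Ω, v (gradMat u x)) :
    ∀ u : Vec n → Vec m, MemW1inftyGamma D u →
      0 ≤ ∫ x in D.Ω, v (gradMat u x) :=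
  stmt2_general p hp v hhom D q hqcb
end
end

section
/- Suppose n ≥ 2 and p > 1. The set H^ϱ = {δ̄_{ϱ,∇u} : u ∈ W^{1,p}₀(B(0,1);ℝᵐ)} of measures is convex; i.e., for u₁, u₂ ∈ W^{1,p}₀(B(0,1);ℝᵐ) and λ ∈ [0,1] there exists u ∈ W^{1,p}₀(B(0,1);ℝᵐ) such that for every continuous positively p-homogeneous v : ℝ^{m×n} → ℝ, ∫_{B_ϱ} v(∇u) dx = λ ∫_{B_ϱ} v(∇u₁) dx + (1−λ) ∫_{B_ϱ} v(∇u₂) dx. -/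
open MeasureTheory Filter
open scoped RealInnerProductSpace
noncomputable section

/-- `u ∈ W^{1,p}₀(B(0,1);ℝᵐ)` (extended by zero to `ℝⁿ`). -/
def MemW1p0Ball {m n : ℕ} (p : ℝ) (u : Vec n → Vec m) : Prop :=
  Differentiable ℝ u ∧ tsupport u ⊆ Metric.closedBall 0 1 ∧
  MemLp u (ENNReal.ofReal p) volume ∧
  MemLp (gradMat u) (ENNReal.ofReal p) volume

/-!
Rescale `u₁` into `B(0,1/5)` and `u₂` into `B(x₀,1/5)`, with `x₀ ⊥ ϱ` and `|x₀| = 1/2`, by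
`ũ(x) = 5^{n/p-1} u(5(x-c))`. Since `c ⊥ ϱ`, the half-space `{ϱ·x < 0}` is invariant under
`x ↦ 5(x-c)`, and by `p`-homogeneity the factor `5^{n/p}` in `∇ũ` exactly cancels the Jacobian
`5^{-n}`, so `∫_{B_ϱ} v(∇ũ) = ∫_{B_ϱ} v(∇u)`. The supports of `ũ₁`, `ũ₂` are disjoint, so at every
point `∇u` for `u = λ^{1/p} ũ₁ + (1-λ)^{1/p} ũ₂` is a multiple of only one of `∇ũ₁`, `∇ũ₂`, and
homogeneity gives `v(∇u) = λ v(∇ũ₁) + (1-λ) v(∇ũ₂)` pointwise.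
-/

open Function Metric Set
open scoped ENNReal

def IsPosHomogeneous {E : Type*} [SMul ℝ E] (p : ℝ) (v : E → ℝ) : Prop :=
  ∀ α : ℝ, 0 ≤ α → ∀ s : E, v (α • s) = α ^ p * v s

namespace IsPosHomogeneous

variable {E : Type*} [NormedAddCommGroup E] [NormedSpace ℝ E] {p : ℝ} {v : E → ℝ}

theorem map_zero (hv : IsPosHomogeneous p v) (hp : p ≠ 0) : v 0 = 0 := by
  simpa [Real.zero_rpow hp] using hv 0 le_rfl 0

theorem map_smul_add_smul (hv : IsPosHomogeneous p v) (hp : p ≠ 0) {a b : ℝ} (ha : 0 ≤ a)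
    (hb : 0 ≤ b) {s t : E} (hst : s = 0 ∨ t = 0) :
    v (a • s + b • t) = a ^ p * v s + b ^ p * v t := by
  rcases hst with rfl | rfl
  · simp [hv b hb, hv.map_zero hp]
  · simp [hv a ha, hv.map_zero hp]

theorem abs_le [ProperSpace E] (hv : IsPosHomogeneous p v) (hcont : Continuous v) (hp : p ≠ 0) :
    ∃ C, ∀ s, |v s| ≤ C * ‖s‖ ^ p := by
  obtain ⟨C, hC⟩ := (isCompact_sphere (0 : E) 1).exists_bound_of_continuousOn hcont.continuousOn
  refine ⟨C, fun s => ?_⟩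
  rcases eq_or_ne s 0 with rfl | hs
  · simp [hv.map_zero hp, Real.zero_rpow hp]
  have hsphere : ‖s‖⁻¹ • s ∈ sphere (0 : E) 1 := by
    simpa using norm_smul_inv_norm (𝕜 := ℝ) hs
  have hvs : v s = ‖s‖ ^ p * v (‖s‖⁻¹ • s) := by
    rw [← hv _ (norm_nonneg s), smul_inv_smul₀ (norm_ne_zero_iff.mpr hs)]
  rw [hvs, abs_mul, abs_of_nonneg (by positivity), mul_comm]
  exact mul_le_mul_of_nonneg_right (hC _ hsphere) (by positivity)

theorem integrable_comp [ProperSpace E] {α : Type*} [MeasurableSpace α] {μ : Measure α}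
    (hv : IsPosHomogeneous p v) (hcont : Continuous v) (hp : 0 < p) {F : α → E}
    (hF : MemLp F (ENNReal.ofReal p) μ) : Integrable (fun x => v (F x)) μ := by
  obtain ⟨C, hC⟩ := hv.abs_le hcont hp.ne'
  have hFp : Integrable (fun x => ‖F x‖ ^ p) μ := by
    simpa [hp.le] using hF.integrable_norm_rpow (by simpa using hp) ENNReal.ofReal_ne_top
  exact (hFp.const_mul C).mono' (hcont.comp_aestronglyMeasurable hF.aestronglyMeasurable)
    (.of_forall fun x => hC (F x))

end IsPosHomogeneous

section AddHaar

variable {E F : Type*} [NormedAddCommGroup E] [NormedSpace ℝ E] [MeasurableSpace E] [BorelSpace E]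
  [FiniteDimensional ℝ E] (μ : Measure E) [μ.IsAddHaarMeasure] [NormedAddCommGroup F]

theorem MeasureTheory.MemLp.comp_smul_sub {q : ℝ≥0∞} {f : E → F} (hf : MemLp f q μ) {r : ℝ}
    (hr : r ≠ 0) (c : E) : MemLp (fun x => f (r • (x - c))) q μ := by
  have hsmul : MemLp (fun x => f (r • x)) q μ := by
    have h := hf.smul_measure (c := ENNReal.ofReal |(r ^ Module.finrank ℝ E)⁻¹|)
      ENNReal.ofReal_ne_top
    rw [← Measure.map_addHaar_smul μ hr] at h
    exact h.comp_of_map (measurable_const_smul r).aemeasurable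
  exact hsmul.comp_measurePreserving (measurePreserving_sub_right μ c)

variable [NormedSpace ℝ F]

theorem integral_comp_smul_sub (f : E → F) (r : ℝ) (c : E) :
    ∫ x, f (r • (x - c)) ∂μ = |(r ^ Module.finrank ℝ E)⁻¹| • ∫ x, f x ∂μ := by
  rw [integral_sub_right_eq_self (fun x => f (r • x)) c, Measure.integral_comp_smul]

theorem setIntegral_comp_smul_sub (f : E → F) (r : ℝ) (c : E) {s : Set E} (hs : MeasurableSet s) :
    ∫ x in (fun x => r • (x - c)) ⁻¹' s, f (r • (x - c)) ∂μ =
      |(r ^ Module.finrank ℝ E)⁻¹| • ∫ x in s, f x ∂μ := by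
  rw [← integral_indicator hs, ← integral_comp_smul_sub,
    ← integral_indicator (hs.preimage (by fun_prop))]
  exact integral_congr_ae (.of_forall fun x => indicator_comp_right (g := f) _)

theorem setIntegral_ball_inter_eq {f : E → F} {a : E} {r : ℝ} (hr : r ≠ 0) {s : Set E}
    (hs : MeasurableSet s) (hf : support f ⊆ closedBall a r) :
    ∫ x in ball a r ∩ s, f x ∂μ = ∫ x in s, f x ∂μ := by
  refine (setIntegral_eq_of_subset_of_ae_sdiff_eq_zero hs.nullMeasurableSet inter_subset_right
    ?_).symm
  filter_upwards [measure_eq_zero_iff_ae_notMem.mp (Measure.addHaar_sphere_of_ne_zero μ a hr)]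
    with x hx hxs
  by_contra hfx
  rw [← closedBall_sdiff_sphere] at hxs
  exact hxs.2 ⟨⟨hf hfx, hx⟩, hxs.1⟩

end AddHaar

theorem exists_inner_eq_zero_norm_eq {E : Type*} [NormedAddCommGroup E] [InnerProductSpace ℝ E]
    [FiniteDimensional ℝ E] (hE : 2 ≤ Module.finrank ℝ E) (ϱ : E) {r : ℝ} (hr : 0 ≤ r) :
    ∃ x : E, ⟪ϱ, x⟫ = 0 ∧ ‖x‖ = r := by
  have : Nontrivial (ℝ ∙ ϱ)ᗮ := by
    rw [Submodule.nontrivial_iff_ne_bot]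
    intro hbot
    have h := (ℝ ∙ ϱ).finrank_add_finrank_orthogonal
    rw [hbot, finrank_bot] at h
    have hspan := finrank_span_le_card (R := ℝ) ({ϱ} : Set E)
    rw [Set.toFinset_singleton, Finset.card_singleton] at hspan
    omega
  obtain ⟨x, hx⟩ := exists_norm_eq (ℝ ∙ ϱ)ᗮ hr
  exact ⟨x, Submodule.mem_orthogonal_singleton_iff_inner_right.mp x.2, hx⟩

section Gradient

variable {m n : ℕ}

def clmToMat : (Vec n →L[ℝ] Vec m) →ₗ[ℝ] Mat m n where
  toFun f := (EuclideanSpace.equiv (Fin m × Fin n) ℝ).symm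
    fun q => f (EuclideanSpace.single q.2 1) q.1
  map_add' f g := by ext; simp
  map_smul' a f := by ext; simp

theorem gradMat_eq_clmToMat (u : Vec n → Vec m) (x : Vec n) :
    gradMat u x = clmToMat (fderiv ℝ u x) := rfl

theorem support_gradMat_subset (u : Vec n → Vec m) : support (gradMat u) ⊆ tsupport u :=
  (support_comp_subset (map_zero clmToMat) _).trans (support_fderiv_subset ℝ)

theorem gradMat_eq_zero_of_notMem_tsupport {u : Vec n → Vec m} {x : Vec n}
    (hx : x ∉ tsupport u) : gradMat u x = 0 :=
  notMem_support.mp fun h => hx (support_gradMat_subset u h)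

theorem gradMat_smul_add {u₁ u₂ : Vec n → Vec m} {x : Vec n} (h₁ : DifferentiableAt ℝ u₁ x)
    (h₂ : DifferentiableAt ℝ u₂ x) (a b : ℝ) :
    gradMat (fun y => a • u₁ y + b • u₂ y) x = a • gradMat u₁ x + b • gradMat u₂ x := by
  have hd : HasFDerivAt (fun y => a • u₁ y + b • u₂ y) (a • fderiv ℝ u₁ x + b • fderiv ℝ u₂ x) x :=
    (h₁.hasFDerivAt.const_smul a).add (h₂.hasFDerivAt.const_smul b)
  rw [gradMat_eq_clmToMat, hd.fderiv, map_add, map_smul, map_smul]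
  rfl

end Gradient

section Rescaling

variable {m n : ℕ}

def rescale (p r : ℝ) (c : Vec n) (u : Vec n → Vec m) (x : Vec n) : Vec m :=
  r ^ ((n : ℝ) / p - 1) • u (r • (x - c))

theorem Differentiable.rescale {u : Vec n → Vec m} (hu : Differentiable ℝ u) (p r : ℝ)
    (c : Vec n) : Differentiable ℝ (rescale p r c u) := by
  unfold _root_.rescale
  fun_prop

theorem gradMat_rescale (p : ℝ) {r : ℝ} (hr : r ≠ 0) (c : Vec n) {u : Vec n → Vec m}
    (hu : Differentiable ℝ u) (x : Vec n) :
    gradMat (rescale p r c u) x = r ^ ((n : ℝ) / p) • gradMat u (r • (x - c)) := by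
  have hT : HasFDerivAt (fun y : Vec n => r • (y - c)) (r • ContinuousLinearMap.id ℝ (Vec n)) x :=
    ((hasFDerivAt_id x).sub_const c).const_smul r
  have hd : HasFDerivAt (rescale p r c u)
      (r ^ ((n : ℝ) / p - 1) • (fderiv ℝ u (r • (x - c))).comp (r • ContinuousLinearMap.id ℝ _))
      x :=
    ((hu _).hasFDerivAt.comp x hT).const_smul (r ^ ((n : ℝ) / p - 1))
  rw [gradMat_eq_clmToMat, gradMat_eq_clmToMat, hd.fderiv, ContinuousLinearMap.comp_smul,
    ContinuousLinearMap.comp_id, smul_smul, map_smul, Real.rpow_sub_one hr, div_mul_cancel₀ _ hr]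

theorem tsupport_rescale_subset (p : ℝ) {r : ℝ} (hr : 0 < r) (c : Vec n) {u : Vec n → Vec m}
    (hu : tsupport u ⊆ closedBall 0 1) : tsupport (rescale p r c u) ⊆ closedBall c r⁻¹ := by
  let T : Vec n ≃ₜ Vec n := (Homeomorph.subRight c).trans (Homeomorph.smulOfNeZero r hr.ne')
  calc tsupport (rescale p r c u) ⊆ tsupport (u ∘ T) := tsupport_smul_subset_right _ _
    _ = T ⁻¹' tsupport u := tsupport_comp_eq_preimage u T
    _ ⊆ T ⁻¹' closedBall 0 1 := preimage_mono hu
    _ = closedBall c r⁻¹ := by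
      ext x
      simp only [T, Homeomorph.trans_apply, Homeomorph.coe_subRight,
        Homeomorph.smulOfNeZero_apply, mem_preimage, mem_closedBall, dist_eq_norm, sub_zero,
        norm_smul, Real.norm_of_nonneg hr.le]
      rw [mul_comm, ← le_div_iff₀ hr, one_div]

theorem MemW1p0Ball.rescale {p r : ℝ} (hr : 0 < r) {c : Vec n} (hc : ‖c‖ + r⁻¹ ≤ 1)
    {u : Vec n → Vec m} (hu : MemW1p0Ball p u) : MemW1p0Ball p (rescale p r c u) := by
  obtain ⟨hdiff, hsupp, hLp, hgrad⟩ := hu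
  refine ⟨hdiff.rescale p r c, (tsupport_rescale_subset p hr c hsupp).trans
    (closedBall_subset_closedBall' (by rwa [dist_zero_right, add_comm])),
    (hLp.comp_smul_sub volume hr.ne' c).const_smul (r ^ ((n : ℝ) / p - 1)), ?_⟩
  rw [funext (gradMat_rescale p hr.ne' c hdiff)]
  exact (hgrad.comp_smul_sub volume hr.ne' c).const_smul (r ^ ((n : ℝ) / p))

theorem setIntegral_halfBall_rescale {p r : ℝ} (hp : p ≠ 0) (hr : 0 < r) {ϱ c : Vec n}
    (hcϱ : ⟪ϱ, c⟫ = 0) (hc : ‖c‖ + r⁻¹ ≤ 1) {u : Vec n → Vec m} (hu : MemW1p0Ball p u)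
    {v : Mat m n → ℝ} (hv : IsPosHomogeneous p v) :
    ∫ x in ball 0 1 ∩ {x | ⟪ϱ, x⟫ < 0}, v (gradMat (rescale p r c u) x) =
      ∫ x in ball 0 1 ∩ {x | ⟪ϱ, x⟫ < 0}, v (gradMat u x) := by
  set H := {x : Vec n | ⟪ϱ, x⟫ < 0}
  have hH : MeasurableSet H := measurableSet_lt (by fun_prop) measurable_const
  have hTH : (fun x : Vec n => r • (x - c)) ⁻¹' H = H := by
    ext x
    simp [H, inner_smul_right, inner_sub_right, hcϱ, mul_neg_iff, hr, hr.not_gt]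
  have hsupp : ∀ {w : Vec n → Vec m}, MemW1p0Ball p w →
      support (fun x => v (gradMat w x)) ⊆ closedBall 0 1 := fun hw =>
    ((support_comp_subset (hv.map_zero hp) _).trans (support_gradMat_subset _)).trans hw.2.1
  calc ∫ x in ball 0 1 ∩ H, v (gradMat (rescale p r c u) x)
      = ∫ x in H, v (gradMat (rescale p r c u) x) :=
        setIntegral_ball_inter_eq volume one_ne_zero hH (hsupp (hu.rescale hr hc))
    _ = ∫ x in (fun x => r • (x - c)) ⁻¹' H, r ^ n * v (gradMat u (r • (x - c))) := by
        rw [hTH]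
        congr 1 with x
        rw [gradMat_rescale p hr.ne' c hu.1, hv _ (by positivity), ← Real.rpow_mul hr.le,
          div_mul_cancel₀ _ hp, Real.rpow_natCast]
    _ = r ^ n * |(r ^ n)⁻¹| * ∫ x in H, v (gradMat u x) := by
        rw [integral_const_mul, setIntegral_comp_smul_sub volume (fun y => v (gradMat u y)) r c hH,
          finrank_euclideanSpace_fin, smul_eq_mul, mul_assoc]
    _ = ∫ x in H, v (gradMat u x) := by
        rw [abs_of_pos (by positivity), mul_inv_cancel₀ (by positivity), one_mul]
    _ = ∫ x in ball 0 1 ∩ H, v (gradMat u x) :=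
        (setIntegral_ball_inter_eq volume one_ne_zero hH (hsupp hu)).symm

end Rescaling

section Superposition

variable {m n : ℕ}

theorem MemW1p0Ball.smul_add {p : ℝ} {u₁ u₂ : Vec n → Vec m} (h₁ : MemW1p0Ball p u₁)
    (h₂ : MemW1p0Ball p u₂) (a b : ℝ) : MemW1p0Ball p (fun x => a • u₁ x + b • u₂ x) := by
  obtain ⟨hdiff₁, hsupp₁, hLp₁, hgrad₁⟩ := h₁
  obtain ⟨hdiff₂, hsupp₂, hLp₂, hgrad₂⟩ := h₂
  refine ⟨(hdiff₁.const_smul a).add (hdiff₂.const_smul b), (tsupport_add _ _).trans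
    (union_subset ((tsupport_smul_subset_right _ _).trans hsupp₁)
      ((tsupport_smul_subset_right _ _).trans hsupp₂)),
    (hLp₁.const_smul a).add (hLp₂.const_smul b), ?_⟩
  rw [funext fun x => gradMat_smul_add (hdiff₁ x) (hdiff₂ x) a b]
  exact (hgrad₁.const_smul a).add (hgrad₂.const_smul b)

theorem IsPosHomogeneous.apply_gradMat_smul_add {p : ℝ} {v : Mat m n → ℝ}
    (hv : IsPosHomogeneous p v) (hp : p ≠ 0) {u₁ u₂ : Vec n → Vec m} (h₁ : Differentiable ℝ u₁)
    (h₂ : Differentiable ℝ u₂) (hdisj : Disjoint (tsupport u₁) (tsupport u₂)) {a b : ℝ}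
    (ha : 0 ≤ a) (hb : 0 ≤ b) (x : Vec n) :
    v (gradMat (fun y => a • u₁ y + b • u₂ y) x) =
      a ^ p * v (gradMat u₁ x) + b ^ p * v (gradMat u₂ x) := by
  rw [gradMat_smul_add (h₁ x) (h₂ x)]
  refine hv.map_smul_add_smul hp ha hb ?_
  by_cases hx : x ∈ tsupport u₁
  · exact .inr (gradMat_eq_zero_of_notMem_tsupport (hdisj.notMem_of_mem_left hx))
  · exact .inl (gradMat_eq_zero_of_notMem_tsupport hx)

end Superposition

theorem stmt8_general {m n : ℕ} (hn : 2 ≤ n) (p : ℝ) (hp : 1 < p)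
    (ϱ : Vec n)
    (u₁ u₂ : Vec n → Vec m) (h₁ : MemW1p0Ball p u₁) (h₂ : MemW1p0Ball p u₂)
    (l : ℝ) (hl0 : 0 ≤ l) (hl1 : l ≤ 1) :
    ∃ u : Vec n → Vec m, MemW1p0Ball p u ∧
      ∀ v : Mat m n → ℝ, Continuous v →
        (∀ α : ℝ, 0 ≤ α → ∀ s : Mat m n, v (α • s) = α ^ p * v s) →
        ∫ x in Metric.ball (0 : Vec n) 1 ∩ {x : Vec n | ⟪ϱ, x⟫ < 0}, v (gradMat u x) =
          l * (∫ x in Metric.ball (0 : Vec n) 1 ∩ {x : Vec n | ⟪ϱ, x⟫ < 0},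
                v (gradMat u₁ x)) +
          (1 - l) * ∫ x in Metric.ball (0 : Vec n) 1 ∩ {x : Vec n | ⟪ϱ, x⟫ < 0},
                v (gradMat u₂ x) := by
  have hp0 : 0 < p := by linarith
  obtain ⟨x₀, hx₀ϱ, hx₀⟩ :=
    exists_inner_eq_zero_norm_eq (by simpa using hn) ϱ (by norm_num : (0 : ℝ) ≤ 1 / 2)
  have hc₁ : ‖(0 : Vec n)‖ + 5⁻¹ ≤ 1 := by norm_num
  have hc₂ : ‖x₀‖ + 5⁻¹ ≤ 1 := by norm_num [hx₀]
  have hU₁ := h₁.rescale (by norm_num) hc₁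
  have hU₂ := h₂.rescale (by norm_num) hc₂
  have hdisj : Disjoint (tsupport (rescale p 5 0 u₁)) (tsupport (rescale p 5 x₀ u₂)) :=
    (closedBall_disjoint_closedBall (by norm_num [hx₀])).mono
      (tsupport_rescale_subset p (by norm_num) 0 h₁.2.1)
      (tsupport_rescale_subset p (by norm_num) x₀ h₂.2.1)
  refine ⟨fun x => l ^ p⁻¹ • rescale p 5 0 u₁ x + (1 - l) ^ p⁻¹ • rescale p 5 x₀ u₂ x,
    hU₁.smul_add hU₂ _ _, fun v hv (hhom : IsPosHomogeneous p v) => ?_⟩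
  have hint : ∀ {U : Vec n → Vec m}, MemW1p0Ball p U →
      IntegrableOn (fun x => v (gradMat U x)) (ball 0 1 ∩ {x | ⟪ϱ, x⟫ < 0}) :=
    fun hU => (hhom.integrable_comp hv hp0 hU.2.2.2).integrableOn
  simp_rw [hhom.apply_gradMat_smul_add hp0.ne' hU₁.1 hU₂.1 hdisj (Real.rpow_nonneg hl0 _)
    (Real.rpow_nonneg (sub_nonneg.2 hl1) _), Real.rpow_inv_rpow hl0 hp0.ne',
    Real.rpow_inv_rpow (sub_nonneg.2 hl1) hp0.ne']
  rw [integral_add ((hint hU₁).const_mul l) ((hint hU₂).const_mul _), integral_const_mul,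
    integral_const_mul,
    setIntegral_halfBall_rescale hp0.ne' (by norm_num) (inner_zero_right ϱ) hc₁ h₁ hhom,
    setIntegral_halfBall_rescale hp0.ne' (by norm_num) hx₀ϱ hc₂ h₂ hhom]

/-- convexity of `H^ϱ`: for `u₁, u₂ ∈ W^{1,p}₀(B(0,1);ℝᵐ)` and `λ ∈ [0,1]`
there is `u ∈ W^{1,p}₀(B(0,1);ℝᵐ)` with
`∫_{B_ϱ} v(∇u) = λ∫_{B_ϱ} v(∇u₁) + (1-λ)∫_{B_ϱ} v(∇u₂)` for every continuous positively
`p`-homogeneous `v`, where `B_ϱ = B(0,1) ∩ {ϱ·x < 0}`. -/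
theorem stmt8 {m n : ℕ} (hn : 2 ≤ n) (p : ℝ) (hp : 1 < p)
    (ϱ : Vec n) (hϱ : ‖ϱ‖ = 1)
    (u₁ u₂ : Vec n → Vec m) (h₁ : MemW1p0Ball p u₁) (h₂ : MemW1p0Ball p u₂)
    (l : ℝ) (hl0 : 0 ≤ l) (hl1 : l ≤ 1) :
    ∃ u : Vec n → Vec m, MemW1p0Ball p u ∧
      ∀ v : Mat m n → ℝ, Continuous v →
        (∀ α : ℝ, 0 ≤ α → ∀ s : Mat m n, v (α • s) = α ^ p * v s) →
        ∫ x in Metric.ball (0 : Vec n) 1 ∩ {x : Vec n | ⟪ϱ, x⟫ < 0}, v (gradMat u x) =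
          l * (∫ x in Metric.ball (0 : Vec n) 1 ∩ {x : Vec n | ⟪ϱ, x⟫ < 0},
                v (gradMat u₁ x)) +
          (1 - l) * ∫ x in Metric.ball (0 : Vec n) 1 ∩ {x : Vec n | ⟪ϱ, x⟫ < 0},
                v (gradMat u₂ x) :=
  stmt8_general hn p hp ϱ u₁ u₂ h₁ h₂ l hl0 hl1
end
end
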